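/- Under Assumption 1, the set of optimal robust policies Π* = { π : S → Δ(A) | g^π_𝒫(s) = sup over all stationary policies μ of g^μ_𝒫(s), for every s ∈ S } is convex: if π₁, π₂ ∈ Π* and α ∈ [0,1], then the policy π̃ defined by π̃(a|s) = α π₁(a|s) + (1−α) π₂(a|s) also belongs to Π*. -/

import Mathlib

open scoped BigOperators
open Matrix Filter

/-- Support function `σ_Q(V) = min_{p ∈ Q} ∑_{s'} p(s') V(s')` (as an infimum,
which is attained when `Q` is nonempty and compact). -/
noncomputable def suppF {S : Type*} [Fintype S] (Q : Set (S → ℝ)) (V : S → ℝ) : ℝ :=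
  sInf ((fun p => ∑ s', p s' * V s') '' Q)

/-- The stochastic matrix `P^π` induced by a stationary policy `π` and a kernel `P`. -/
noncomputable def polMat {S A : Type*} [Fintype S] [Fintype A]
    (π : S → A → ℝ) (P : S → A → S → ℝ) : Matrix S S ℝ :=
  Matrix.of fun s s' => ∑ a, π s a * P s a s'

/-- The reward vector `r^π`. -/
noncomputable def polRew {S A : Type*} [Fintype A]
    (π : S → A → ℝ) (r : S → A → ℝ) : S → ℝ :=
  fun s => ∑ a, π s a * r s a

/-- The average reward `g^π_P(s) = liminf_n (1/n) ∑_{t<n} ((P^π)^t r^π)(s)`. -/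
noncomputable def avgR {S A : Type*} [Fintype S] [DecidableEq S] [Fintype A]
    (π : S → A → ℝ) (P : S → A → S → ℝ) (r : S → A → ℝ) (s : S) : ℝ :=
  Filter.liminf
    (fun n : ℕ => (∑ t ∈ Finset.range n, ((polMat π P ^ t) *ᵥ polRew π r) s) / n)
    Filter.atTop

/-- The robust average reward `g^π_U(s) = inf_{P ∈ U} g^π_P(s)`. -/
noncomputable def robAvgR {S A : Type*} [Fintype S] [DecidableEq S] [Fintype A]
    (U : S → A → Set (S → ℝ)) (π : S → A → ℝ) (r : S → A → ℝ) (s : S) : ℝ :=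
  sInf {x | ∃ P : S → A → S → ℝ, (∀ s' a, P s' a ∈ U s' a) ∧ x = avgR π P r s}

/-- A stochastic matrix is irreducible: all states communicate. -/
def IrredM {S : Type*} [Fintype S] [DecidableEq S] (M : Matrix S S ℝ) : Prop :=
  ∀ s s' : S, ∃ k : ℕ, 1 ≤ k ∧ 0 < (M ^ k) s s'

/-- Assumption 1: for every deterministic policy `d` and every kernel `P ∈ U`,
the matrix `P^d` is irreducible. -/
def Assump1 {S A : Type*} [Fintype S] [DecidableEq S]
    (U : S → A → Set (S → ℝ)) : Prop :=
  ∀ (d : S → A) (P : S → A → S → ℝ), (∀ s a, P s a ∈ U s a) →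
    IrredM (Matrix.of fun s s' => P s (d s) s')

/-!
Under Assumption 1 the robust average-reward optimality equation
`g + h s = max_a (r s a + σ_{U s a}(h))` has a solution: the fixed points `V_γ` of the discounted
robust Bellman operators have spans bounded uniformly in `γ`, because the worst-case chains of a
fixed deterministic policy are uniformly irreducible over the compact set of kernels, so
`V_γ - V_γ s₀` has a limit point `h` as `γ → 1`.
Given `(g, h)`, every policy has robust average reward at most `g` (telescope along a worst-case
kernel for `h`), and a policy attaining the maximum of the equation at every state has robust
average reward at least `g`, so the optimal value is `g`. Conversely, if an optimal policy missed
the maximum at some state, the irreducibility of its worst-case chain would spread this slack and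
push its average reward below `g`. So the optimal policies are exactly the greedy ones for `h`, and
greediness survives convex combinations since the equation is linear in the policy.
-/

open Finset Topology

namespace RobustMDP

section SupportFunction

variable {ι : Type*} [Fintype ι]

theorem dotProduct_const_of_mem_stdSimplex {p : ι → ℝ} (hp : p ∈ stdSimplex ℝ ι) (c : ℝ) :
    p ⬝ᵥ (fun _ => c) = c := by
  simp only [dotProduct, ← sum_mul, hp.2, one_mul]

theorem dotProduct_le_of_mem_stdSimplex {p V : ι → ℝ} (hp : p ∈ stdSimplex ℝ ι) {b : ℝ}
    (hV : ∀ i, V i ≤ b) : p ⬝ᵥ V ≤ b :=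
  (dotProduct_le_dotProduct_of_nonneg_left hV hp.1).trans
    (dotProduct_const_of_mem_stdSimplex hp b).le

theorem apply_le_add_dist (V W : ι → ℝ) (i : ι) : V i ≤ W i + dist V W := by
  have := (abs_le.1 ((Real.dist_eq _ _).symm.trans_le (dist_le_pi_dist V W i))).2
  linarith

structure IsUncertaintySet (Q : Set (ι → ℝ)) : Prop where
  nonempty : Q.Nonempty
  isCompact : IsCompact Q
  subset_stdSimplex : Q ⊆ stdSimplex ℝ ι

variable {Q : Set (ι → ℝ)}

theorem suppF_le_dotProduct (hQ : IsCompact Q) (V : ι → ℝ) {p : ι → ℝ} (hp : p ∈ Q) :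
    suppF Q V ≤ p ⬝ᵥ V :=
  csInf_le (hQ.image (continuous_id.dotProduct continuous_const)).bddBelow ⟨p, hp, rfl⟩

theorem exists_dotProduct_eq_suppF (hQ : IsUncertaintySet Q) (V : ι → ℝ) :
    ∃ p ∈ Q, p ⬝ᵥ V = suppF Q V :=
  (hQ.isCompact.image (continuous_id.dotProduct continuous_const)).sInf_mem
    (hQ.nonempty.image _)

theorem suppF_mono (hQ : IsUncertaintySet Q) {V W : ι → ℝ} (h : V ≤ W) :
    suppF Q V ≤ suppF Q W := by
  obtain ⟨p, hp, hpW⟩ := exists_dotProduct_eq_suppF hQ W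
  calc suppF Q V ≤ p ⬝ᵥ V := suppF_le_dotProduct hQ.isCompact V hp
    _ ≤ p ⬝ᵥ W := dotProduct_le_dotProduct_of_nonneg_left h (hQ.subset_stdSimplex hp).1
    _ = suppF Q W := hpW

theorem suppF_add_const (hQ : IsUncertaintySet Q) (V : ι → ℝ) (c : ℝ) :
    suppF Q (fun i => V i + c) = suppF Q V + c := by
  have hshift : ∀ p ∈ Q, p ⬝ᵥ (fun i => V i + c) = p ⬝ᵥ V + c := fun p hp => by
    rw [show (fun i => V i + c) = V + fun _ => c from rfl, dotProduct_add,
      dotProduct_const_of_mem_stdSimplex (hQ.subset_stdSimplex hp)]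
  obtain ⟨p, hp, hpV⟩ := exists_dotProduct_eq_suppF hQ (fun i => V i + c)
  obtain ⟨q, hq, hqV⟩ := exists_dotProduct_eq_suppF hQ V
  have h₁ := suppF_le_dotProduct hQ.isCompact (fun i => V i + c) hq
  have h₂ := suppF_le_dotProduct hQ.isCompact V hp
  rw [hshift q hq, hqV] at h₁
  rw [← hpV, hshift p hp] at *
  linarith

theorem lipschitzWith_suppF (hQ : IsUncertaintySet Q) : LipschitzWith 1 (suppF Q) :=
  LipschitzWith.of_le_add fun V W =>
    (suppF_mono hQ (apply_le_add_dist V W)).trans (suppF_add_const hQ W _).le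

end SupportFunction

section StochasticMatrix

variable {S : Type*} [Fintype S] [DecidableEq S] {M : Matrix S S ℝ}

theorem mulVec_const_of_mem_rowStochastic (hM : M ∈ rowStochastic ℝ S) (c : ℝ) :
    M *ᵥ (fun _ => c) = fun _ => c := by
  have h : (fun _ : S => c) = c • (1 : S → ℝ) := by ext; simp
  rw [h, mulVec_smul, one_vecMul_of_mem_rowStochastic hM]

theorem mulVec_mono_of_mem_rowStochastic (hM : M ∈ rowStochastic ℝ S) {v w : S → ℝ}
    (h : v ≤ w) : M *ᵥ v ≤ M *ᵥ w := fun s => by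
  have := nonneg_mulVec_of_mem_rowStochastic hM (x := w - v) (fun i => sub_nonneg.2 (h i)) s
  rwa [mulVec_sub, Pi.sub_apply, sub_nonneg] at this

theorem mulVec_le_of_mem_rowStochastic (hM : M ∈ rowStochastic ℝ S) {v : S → ℝ} {b : ℝ}
    (hv : ∀ s, v s ≤ b) (s : S) : (M *ᵥ v) s ≤ b := by
  simpa [mulVec_const_of_mem_rowStochastic hM] using
    mulVec_mono_of_mem_rowStochastic hM (w := fun _ => b) hv s

theorem le_mulVec_of_mem_rowStochastic (hM : M ∈ rowStochastic ℝ S) {v : S → ℝ} {b : ℝ}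
    (hv : ∀ s, b ≤ v s) (s : S) : b ≤ (M *ᵥ v) s := by
  simpa [mulVec_const_of_mem_rowStochastic hM] using
    mulVec_mono_of_mem_rowStochastic hM (v := fun _ => b) hv s

theorem abs_mulVec_le_norm (hM : M ∈ rowStochastic ℝ S) (v : S → ℝ) (s : S) :
    |(M *ᵥ v) s| ≤ ‖v‖ := by
  have hv : ∀ s, |v s| ≤ ‖v‖ := fun s => by simpa using norm_le_pi_norm v s
  exact abs_le.2 ⟨le_mulVec_of_mem_rowStochastic hM (fun s => (abs_le.1 (hv s)).1) s,
    mulVec_le_of_mem_rowStochastic hM (fun s => (abs_le.1 (hv s)).2) s⟩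

theorem of_mem_rowStochastic {f : S → S → ℝ} (hf : ∀ s, f s ∈ stdSimplex ℝ S) :
    Matrix.of f ∈ rowStochastic ℝ S :=
  mem_rowStochastic_iff_sum.2 ⟨fun s s' => (hf s).1 s', fun s => (hf s).2⟩

theorem sum_range_pow_mulVec_sub (M : Matrix S S ℝ) (v : S → ℝ) (n : ℕ) :
    ∑ t ∈ range n, M ^ t *ᵥ (M *ᵥ v - v) = M ^ n *ᵥ v - v := by
  have h : ∀ t, M ^ t *ᵥ (M *ᵥ v - v) = M ^ (t + 1) *ᵥ v - M ^ t *ᵥ v := fun t => by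
    rw [mulVec_sub, mulVec_mulVec, pow_succ]
  simp only [h, sum_range_sub (fun t => M ^ t *ᵥ v), pow_zero, one_mulVec]

theorem mulVec_sum_range_pow_mulVec (M : Matrix S S ℝ) (v : S → ℝ) (n : ℕ) :
    M *ᵥ ∑ t ∈ range n, M ^ t *ᵥ v = ∑ t ∈ range n, M ^ t *ᵥ v + (M ^ n *ᵥ v - v) := by
  rw [← sum_range_pow_mulVec_sub, mulVec_sum, ← sum_add_distrib]
  refine sum_congr rfl fun t _ => ?_
  rw [mulVec_mulVec, ← pow_succ', mulVec_sub, mulVec_mulVec, ← pow_succ]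
  abel

end StochasticMatrix

section Cesaro

variable {S : Type*} [Fintype S] [DecidableEq S] {M : Matrix S S ℝ}

noncomputable def cesaroMean (M : Matrix S S ℝ) (v : S → ℝ) (n : ℕ) (s : S) : ℝ :=
  (∑ t ∈ range n, (M ^ t *ᵥ v) s) / n

theorem cesaroMean_le (hM : M ∈ rowStochastic ℝ S) {v : S → ℝ} {b : ℝ} (hv : ∀ s, v s ≤ b)
    {n : ℕ} (hn : n ≠ 0) (s : S) : cesaroMean M v n s ≤ b := by
  rw [cesaroMean, div_le_iff₀ (by positivity)]
  calc ∑ t ∈ range n, (M ^ t *ᵥ v) s ≤ ∑ _t ∈ range n, b :=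
        sum_le_sum fun t _ => mulVec_le_of_mem_rowStochastic (pow_mem hM t) hv s
    _ = b * n := by simp [mul_comm]

theorem le_cesaroMean (hM : M ∈ rowStochastic ℝ S) {v : S → ℝ} {b : ℝ} (hv : ∀ s, b ≤ v s)
    {n : ℕ} (hn : n ≠ 0) (s : S) : b ≤ cesaroMean M v n s := by
  rw [cesaroMean, le_div_iff₀ (by positivity)]
  calc b * n = ∑ _t ∈ range n, b := by simp [mul_comm]
    _ ≤ ∑ t ∈ range n, (M ^ t *ᵥ v) s :=
        sum_le_sum fun t _ => le_mulVec_of_mem_rowStochastic (pow_mem hM t) hv s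

theorem abs_cesaroMean_add_sub_le (hM : M ∈ rowStochastic ℝ S) (v h : S → ℝ) (n : ℕ) (s : S) :
    |cesaroMean M (v + (M *ᵥ h - h)) n s - cesaroMean M v n s| ≤ 2 * ‖h‖ / n := by
  have hsum : cesaroMean M (v + (M *ᵥ h - h)) n s - cesaroMean M v n s
      = ((M ^ n *ᵥ h) s - h s) / n := by
    simp only [cesaroMean, mulVec_add, Pi.add_apply, sum_add_distrib, ← sub_div,
      add_sub_cancel_left]
    rw [← Finset.sum_apply s (range n) fun t => M ^ t *ᵥ (M *ᵥ h - h), sum_range_pow_mulVec_sub,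
      Pi.sub_apply]
  have hh : |h s| ≤ ‖h‖ := by simpa using norm_le_pi_norm h s
  rw [hsum, abs_div, Nat.abs_cast]
  gcongr
  linarith [abs_sub ((M ^ n *ᵥ h) s) (h s), abs_mulVec_le_norm (pow_mem hM n) h s]

theorem le_liminf_cesaroMean (hM : M ∈ rowStochastic ℝ S) {v h : S → ℝ} {g : ℝ}
    (hle : ∀ s, g + h s ≤ v s + (M *ᵥ h) s) (s : S) :
    g ≤ liminf (fun n => cesaroMean M v n s) atTop := by
  have hlow : ∀ n ≠ 0, g - 2 * ‖h‖ / n ≤ cesaroMean M v n s := fun n hn => by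
    have h₁ := le_cesaroMean hM (v := v + (M *ᵥ h - h)) (b := g)
      (fun s => by simp only [Pi.add_apply, Pi.sub_apply]; linarith [hle s]) hn s
    linarith [(abs_le.1 (abs_cesaroMean_add_sub_le hM v h n s)).2]
  have hlim : Tendsto (fun n : ℕ => g - 2 * ‖h‖ / n) atTop (𝓝 g) := by
    simpa using tendsto_const_nhds.sub (tendsto_const_div_atTop_nhds_zero_nat (2 * ‖h‖))
  have hv : ∀ s, v s ≤ ‖v‖ := fun s => le_of_abs_le (by simpa using norm_le_pi_norm v s)
  calc g = liminf (fun n : ℕ => g - 2 * ‖h‖ / n) atTop := hlim.liminf_eq.symm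
    _ ≤ liminf (fun n => cesaroMean M v n s) atTop :=
      liminf_le_liminf ((eventually_ne_atTop 0).mono hlow) hlim.isBoundedUnder_ge
        (isCoboundedUnder_ge_of_eventually_le atTop
          ((eventually_ne_atTop 0).mono fun n hn => cesaroMean_le hM hv hn s))

theorem liminf_cesaroMean_le (hM : M ∈ rowStochastic ℝ S) {v h : S → ℝ} {g : ℝ}
    (hle : ∀ s, v s + (M *ᵥ h) s ≤ g + h s) (s : S) :
    liminf (fun n => cesaroMean M v n s) atTop ≤ g := by
  have hup : ∀ n ≠ 0, cesaroMean M v n s ≤ g + 2 * ‖h‖ / n := fun n hn => by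
    have h₁ := cesaroMean_le hM (v := v + (M *ᵥ h - h)) (b := g)
      (fun s => by simp only [Pi.add_apply, Pi.sub_apply]; linarith [hle s]) hn s
    linarith [(abs_le.1 (abs_cesaroMean_add_sub_le hM v h n s)).1]
  have hlim : Tendsto (fun n : ℕ => g + 2 * ‖h‖ / n) atTop (𝓝 g) := by
    simpa using tendsto_const_nhds.add (tendsto_const_div_atTop_nhds_zero_nat (2 * ‖h‖))
  have hv : ∀ s, -‖v‖ ≤ v s := fun s => neg_le_of_abs_le (by simpa using norm_le_pi_norm v s)
  calc liminf (fun n => cesaroMean M v n s) atTop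
      ≤ liminf (fun n : ℕ => g + 2 * ‖h‖ / n) atTop :=
        liminf_le_liminf ((eventually_ne_atTop 0).mono hup)
          (isBoundedUnder_of_eventually_ge
            ((eventually_ne_atTop 0).mono fun n hn => le_cesaroMean hM hv hn s))
          hlim.isCoboundedUnder_ge
    _ = g := hlim.liminf_eq

end Cesaro

section Irreducible

variable {S : Type*} [Fintype S] [DecidableEq S]

theorem IrredM.of_pos_imp_pos {M N : Matrix S S ℝ} (hM : M ∈ rowStochastic ℝ S)
    (hN : N ∈ rowStochastic ℝ S) (hNM : ∀ i j, 0 < N i j → 0 < M i j) (hirr : IrredM N) :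
    IrredM M := by
  have hpow : ∀ k i j, 0 < (N ^ k) i j → 0 < (M ^ k) i j := by
    intro k
    induction k with
    | zero => simp
    | succ k ih =>
      intro i j hij
      rw [pow_succ, mul_apply] at hij ⊢
      obtain ⟨l, -, hl⟩ := exists_lt_of_sum_lt (s := univ) (f := fun _ => (0 : ℝ))
        (by simpa using hij)
      obtain ⟨hil, hlj⟩ := (pos_and_pos_or_neg_and_neg_of_mul_pos hl).resolve_right
        fun h => (nonneg_of_mem_rowStochastic hN).not_gt h.2
      exact (mul_pos (ih i l hil) (hNM l j hlj)).trans_le <|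
        single_le_sum (f := fun l => (M ^ k) i l * M l j) (fun l _ => mul_nonneg
          (nonneg_of_mem_rowStochastic (pow_mem hM k)) (nonneg_of_mem_rowStochastic hM))
          (mem_univ l)
  intro i j
  obtain ⟨k, hk, hpos⟩ := hirr i j
  exact ⟨k, hk, hpow k i j hpos⟩

theorem exists_potential {M : Matrix S S ℝ} (hM : M ∈ rowStochastic ℝ S) (hirr : IrredM M)
    {δ : S → ℝ} (hδ : ∀ s, 0 ≤ δ s) {s₀ : S} (hs₀ : 0 < δ s₀) :
    ∃ c > 0, ∃ ψ : S → ℝ, ∀ s, c + ψ s ≤ δ s + (M *ᵥ ψ) s := by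
  have : Nonempty S := ⟨s₀⟩
  choose k _ hk using fun s => hirr s s₀
  set N := univ.sup' univ_nonempty k + 1
  set Z : S → ℝ := ∑ j ∈ range N, M ^ j *ᵥ δ
  have hZ : ∀ s, 0 < Z s := fun s => by
    calc 0 < (M ^ k s) s s₀ * δ s₀ := mul_pos (hk s) hs₀
      _ ≤ (M ^ k s *ᵥ δ) s :=
        single_le_sum (f := fun j => (M ^ k s) s j * δ j)
          (fun j _ => mul_nonneg (nonneg_of_mem_rowStochastic (pow_mem hM _)) (hδ j)) (mem_univ s₀)
      _ ≤ Z s := by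
        rw [show Z s = ∑ j ∈ range N, (M ^ j *ᵥ δ) s from Finset.sum_apply _ _ _]
        exact single_le_sum
          (fun j _ => nonneg_mulVec_of_mem_rowStochastic (pow_mem hM j) hδ s)
          (mem_range.2 (Nat.lt_succ_of_le (le_sup' k (mem_univ s))))
  -- `Ψ = ∑_{j<N} ∑_{i<j} M^i δ` telescopes to `M Ψ - Ψ = Z - N δ`.
  set Ψ : S → ℝ := ∑ j ∈ range N, ∑ i ∈ range j, M ^ i *ᵥ δ
  have hΨ : M *ᵥ Ψ = Ψ + (Z - (N : ℝ) • δ) := by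
    rw [mulVec_sum]
    simp only [mulVec_sum_range_pow_mulVec, sum_add_distrib, sum_sub_distrib, sum_const, card_range,
      Nat.cast_smul_eq_nsmul, Ψ, Z]
  have hNpos : (0 : ℝ) < N := by positivity
  refine ⟨univ.inf' univ_nonempty Z / N, div_pos ((lt_inf'_iff _).2 fun s _ => hZ s) hNpos,
    (N : ℝ)⁻¹ • Ψ, fun s => ?_⟩
  have hinf := inf'_le Z (mem_univ s)
  rw [mulVec_smul, hΨ]
  simp only [Pi.smul_apply, Pi.add_apply, Pi.sub_apply, smul_eq_mul]
  field_simp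
  linarith

theorem exists_uniform_pow_apply_pos [Nonempty S] {C : Set (Matrix S S ℝ)} (hC : IsCompact C)
    (hirr : ∀ M ∈ C, IrredM M) :
    ∃ K : ℕ, ∃ ε > 0, ∀ M ∈ C, ∀ i j, ∃ k ≤ K, ε ≤ (M ^ k) i j := by
  let F : ℕ → Matrix S S ℝ → ℝ := fun K M => univ.inf' univ_nonempty fun p : S × S =>
    (range (K + 1)).sup' nonempty_range_add_one fun k => (M ^ k) p.1 p.2
  have hF : ∀ K, Continuous (F K) := fun K =>
    Continuous.finset_inf'_apply _ fun p _ => Continuous.finset_sup'_apply _ fun k _ =>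
      (continuous_pow k).matrix_elem p.1 p.2
  have hmono : Monotone fun K => {M | 0 < F K M} := by
    intro K L hKL M (hM : 0 < F K M)
    exact hM.trans_le <| inf'_mono_fun fun p _ =>
      sup'_mono _ (range_subset_range.2 (by omega)) nonempty_range_add_one
  have hcover : C ⊆ ⋃ K, {M | 0 < F K M} := fun M hM => by
    choose k _ hk using hirr M hM
    refine Set.mem_iUnion.2 ⟨univ.sup' univ_nonempty fun p : S × S => k p.1 p.2, ?_⟩
    show 0 < F _ M
    refine (lt_inf'_iff _).2 fun p _ => (lt_sup'_iff _).2 ⟨k p.1 p.2, ?_, hk p.1 p.2⟩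
    exact mem_range.2 (Nat.lt_succ_of_le (le_sup' (fun p : S × S => k p.1 p.2) (mem_univ p)))
  obtain ⟨K, hK⟩ := hC.elim_directed_cover _ (fun K => isOpen_lt continuous_const (hF K))
    hcover hmono.directed_le
  obtain ⟨ε, hε, hεF⟩ := hC.exists_forall_le' (hF K).continuousOn hK
  refine ⟨K, ε, hε, fun M hM i j => ?_⟩
  obtain ⟨k, hk, hle⟩ := (le_sup'_iff _).1 ((le_inf'_iff _ _).1 (hεF M hM) (i, j) (mem_univ _))
  exact ⟨k, Nat.lt_succ_iff.1 (mem_range.1 hk), hle⟩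

theorem le_of_le_add_mulVec {Q : Matrix S S ℝ} (hQ : Q ∈ rowStochastic ℝ S) {D : S → ℝ}
    {c : ℝ} (hc : 0 ≤ c) (hD : ∀ s, D s ≤ c + (Q *ᵥ D) s) {sm : S} (hsm : D sm = 0)
    {K : ℕ} {ε : ℝ} (hε : 0 < ε) (hreach : ∀ s, ∃ k ≤ K, ε ≤ (Q ^ k) s sm) (s : S) :
    D s ≤ K * c / ε := by
  have hiter : ∀ k : ℕ, D ≤ (fun _ => k * c) + Q ^ k *ᵥ D := by
    intro k
    induction k with
    | zero => intro s; simp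
    | succ k ih =>
      intro s
      have := mulVec_mono_of_mem_rowStochastic hQ ih s
      rw [mulVec_add, mulVec_const_of_mem_rowStochastic hQ, mulVec_mulVec, ← pow_succ'] at this
      simp only [Pi.add_apply, Nat.cast_succ] at this ⊢
      linarith [hD s]
  have : Nonempty S := ⟨sm⟩
  obtain ⟨sd, hsd⟩ := Finite.exists_max D
  obtain ⟨k, hkK, hk⟩ := hreach sd
  have hD0 : 0 ≤ D sd := hsm ▸ hsd sm
  have hbound : D ≤ (fun _ => D sd) - Pi.single sm (D sd) := fun s => by
    by_cases h : s = sm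
    · subst h; simp [hsm]
    · simp [h, hsd s]
  have hQk := mulVec_mono_of_mem_rowStochastic (pow_mem hQ k) hbound sd
  rw [mulVec_sub, mulVec_const_of_mem_rowStochastic (pow_mem hQ k)] at hQk
  simp only [Pi.sub_apply, mulVec_single, Pi.smul_apply, col_apply, MulOpposite.smul_eq_mul_unop,
    MulOpposite.unop_op] at hQk
  have hkc : (k : ℝ) * c ≤ K * c := mul_le_mul_of_nonneg_right (by exact_mod_cast hkK) hc
  have hsd_iter : D sd ≤ k * c + (Q ^ k *ᵥ D) sd := hiter k sd
  rw [le_div_iff₀ hε]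
  nlinarith [mul_le_mul_of_nonneg_right (hsd s) hε.le, mul_le_mul_of_nonneg_right hk hD0]

end Irreducible

section Kernel

variable {S A : Type*} [Fintype S] {U : S → A → Set (S → ℝ)}

theorem exists_worstCase_kernel (hU : ∀ s a, IsUncertaintySet (U s a)) (V : S → ℝ) :
    ∃ P : S → A → S → ℝ, (∀ s a, P s a ∈ U s a) ∧ ∀ s a, P s a ⬝ᵥ V = suppF (U s a) V := by
  choose P hP hPV using fun s a => exists_dotProduct_eq_suppF (hU s a) V
  exact ⟨P, hP, hPV⟩

end Kernel

section BellmanOperator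

variable {S A : Type*} [Fintype S] [Fintype A] [Nonempty A] {r : S → A → ℝ}
  {U : S → A → Set (S → ℝ)} {γ : ℝ}

noncomputable def qValue (r : S → A → ℝ) (U : S → A → Set (S → ℝ)) (γ : ℝ) (V : S → ℝ) (s : S)
    (a : A) : ℝ :=
  r s a + γ * suppF (U s a) V

noncomputable def bellmanOp (r : S → A → ℝ) (U : S → A → Set (S → ℝ)) (γ : ℝ) (V : S → ℝ) :
    S → ℝ :=
  fun s => univ.sup' univ_nonempty (qValue r U γ V s)

theorem sum_mul_qValue_le_bellmanOp {w : A → ℝ} (hw : w ∈ stdSimplex ℝ A) (V : S → ℝ) (s : S) :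
    ∑ a, w a * qValue r U γ V s a ≤ bellmanOp r U γ V s :=
  dotProduct_le_of_mem_stdSimplex hw fun a => le_sup' _ (mem_univ a)

theorem bellmanOp_mono (hU : ∀ s a, IsUncertaintySet (U s a)) (hγ : 0 ≤ γ) {V W : S → ℝ}
    (h : V ≤ W) : bellmanOp r U γ V ≤ bellmanOp r U γ W := fun s =>
  sup'_mono_fun fun a _ =>
    add_le_add_right (mul_le_mul_of_nonneg_left (suppF_mono (hU s a) h) hγ) _

theorem bellmanOp_add_const (hU : ∀ s a, IsUncertaintySet (U s a)) (V : S → ℝ) (c : ℝ)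
    (s : S) : bellmanOp r U γ (fun s => V s + c) s = bellmanOp r U γ V s + γ * c := by
  rw [bellmanOp, bellmanOp, sup'_add]
  congr 1
  ext a
  simp only [qValue, suppF_add_const (hU s a)]
  ring

theorem dist_bellmanOp_le (hU : ∀ s a, IsUncertaintySet (U s a)) (hγ : 0 ≤ γ) (V W : S → ℝ) :
    dist (bellmanOp r U γ V) (bellmanOp r U γ W) ≤ γ * dist V W := by
  have hle : ∀ V W : S → ℝ, ∀ s, bellmanOp r U γ V s ≤ bellmanOp r U γ W s + γ * dist V W :=
    fun V W s => (bellmanOp_mono hU hγ (apply_le_add_dist V W) s).trans_eq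
      (bellmanOp_add_const hU W _ s)
  refine (dist_pi_le_iff (by positivity)).2 fun s => ?_
  rw [Real.dist_eq, abs_sub_le_iff]
  have hWV := hle W V s
  rw [dist_comm] at hWV
  exact ⟨by linarith [hle V W s], by linarith⟩

theorem exists_bellmanOp_eq_self (hU : ∀ s a, IsUncertaintySet (U s a)) (hγ₀ : 0 ≤ γ)
    (hγ₁ : γ < 1) : ∃ V, bellmanOp r U γ V = V :=
  have hK : ContractingWith ⟨γ, hγ₀⟩ (bellmanOp r U γ) :=
    ⟨hγ₁, LipschitzWith.of_dist_le_mul (dist_bellmanOp_le hU hγ₀)⟩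
  ⟨_, hK.fixedPoint_isFixedPt⟩

theorem continuous_bellmanOp_apply (hU : ∀ s a, IsUncertaintySet (U s a)) (s : S) :
    Continuous fun x : ℝ × (S → ℝ) => bellmanOp r U x.1 x.2 s :=
  Continuous.finset_sup'_apply _ fun a _ => continuous_const.add
    (continuous_fst.mul ((lipschitzWith_suppF (hU s a)).continuous.comp continuous_snd))

theorem sub_le_one_add_mulVec_of_bellmanOp_eq [DecidableEq S]
    (hU : ∀ s a, IsUncertaintySet (U s a)) (hr : ∀ s a, r s a ∈ Set.Icc (0 : ℝ) 1)
    (hγ₀ : 0 ≤ γ) (hγ₁ : γ ≤ 1) {V : S → ℝ} (hV : bellmanOp r U γ V = V)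
    {P : S → A → S → ℝ} (hP : ∀ s a, P s a ∈ U s a)
    (hPV : ∀ s a, P s a ⬝ᵥ V = suppF (U s a) V) (d : S → A) {sm : S} (hsm : ∀ s, V s ≤ V sm)
    (s : S) :
    V sm - V s ≤ 1 + (Matrix.of (fun s s' => P s (d s) s') *ᵥ fun s => V sm - V s) s := by
  set Q := Matrix.of fun s s' => P s (d s) s'
  have hQ : Q ∈ rowStochastic ℝ S :=
    of_mem_rowStochastic fun s => (hU s _).subset_stdSimplex (hP s _)
  have hσ : ∀ s a, suppF (U s a) V ≤ V sm := fun s a => by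
    rw [← hPV]; exact dotProduct_le_of_mem_stdSimplex ((hU s a).subset_stdSimplex (hP s a)) hsm
  have hVsm : V sm ≤ 1 + γ * V sm := by
    conv_lhs => rw [← hV]
    exact sup'_le _ _ fun a _ => add_le_add (hr sm a).2 (mul_le_mul_of_nonneg_left (hσ sm a) hγ₀)
  have hVs : γ * (Q *ᵥ V) s ≤ V s := by
    conv_rhs => rw [← hV]
    refine le_trans ?_ (le_sup' _ (mem_univ (d s)))
    have : (Q *ᵥ V) s = suppF (U s (d s)) V := hPV s (d s)
    rw [this, qValue]
    linarith [(hr s (d s)).1]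
  have hQD : 0 ≤ (Q *ᵥ fun s => V sm - V s) s :=
    nonneg_mulVec_of_mem_rowStochastic hQ (fun s => sub_nonneg.2 (hsm s)) s
  have hQV : (Q *ᵥ fun s => V sm - V s) s = V sm - (Q *ᵥ V) s := by
    rw [show (fun s => V sm - V s) = (fun _ => V sm) - V from rfl, mulVec_sub,
      mulVec_const_of_mem_rowStochastic hQ, Pi.sub_apply]
  nlinarith

theorem bellmanOp_relative_apply (hU : ∀ s a, IsUncertaintySet (U s a)) {V : S → ℝ}
    (hV : bellmanOp r U γ V = V) (s₀ s : S) :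
    bellmanOp r U γ (fun s => V s - V s₀) s₀ + (V s - V s₀)
      = bellmanOp r U γ (fun s => V s - V s₀) s := by
  have h : ∀ s, bellmanOp r U γ (fun s => V s - V s₀) s = V s - γ * V s₀ := fun s => by
    have := bellmanOp_add_const (r := r) (γ := γ) hU V (-V s₀) s
    simp only [← sub_eq_add_neg, mul_neg] at this
    rw [this, congrFun hV s]
  rw [h, h]
  ring

end BellmanOperator

section VanishingDiscount

variable {S A : Type*} [Fintype S] [DecidableEq S] [Nonempty S] [Fintype A] [Nonempty A]
  {r : S → A → ℝ} {U : S → A → Set (S → ℝ)}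

theorem exists_span_bound (hU : ∀ s a, IsUncertaintySet (U s a))
    (hr : ∀ s a, r s a ∈ Set.Icc (0 : ℝ) 1) (hirr : Assump1 U) :
    ∃ C, ∀ γ, 0 ≤ γ → γ < 1 → ∀ V, bellmanOp r U γ V = V → ∀ s s', V s' - V s ≤ C := by
  let d : S → A := fun _ => Classical.arbitrary A
  let kernels : Set (S → A → S → ℝ) := Set.univ.pi fun s => Set.univ.pi (U s)
  have hkernels : IsCompact kernels :=
    isCompact_univ_pi fun s => isCompact_univ_pi fun a => (hU s a).isCompact
  have hcont : Continuous fun P : S → A → S → ℝ => Matrix.of fun s s' => P s (d s) s' := by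
    refine continuous_pi fun s => continuous_pi fun s' => ?_
    simp only [of_apply]
    fun_prop
  obtain ⟨K, ε, hε, hK⟩ := exists_uniform_pow_apply_pos (hkernels.image hcont) <| by
    rintro _ ⟨P, hP, rfl⟩
    exact hirr d P fun s a => hP s trivial a trivial
  refine ⟨K / ε, fun γ hγ₀ hγ₁ V hV s s' => ?_⟩
  obtain ⟨sm, hsm⟩ := Finite.exists_max V
  obtain ⟨P, hP, hPV⟩ := exists_worstCase_kernel hU V
  have hspan := le_of_le_add_mulVec
    (of_mem_rowStochastic fun s => (hU s _).subset_stdSimplex (hP s (d s))) zero_le_one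
    (sub_le_one_add_mulVec_of_bellmanOp_eq hU hr hγ₀ hγ₁.le hV hP hPV d hsm) (sub_self _) hε
    (fun s => hK _ ⟨P, fun s _ a _ => hP s a, rfl⟩ s sm) s
  rw [mul_one] at hspan
  linarith [hsm s']

theorem exists_bellman_solution (hU : ∀ s a, IsUncertaintySet (U s a))
    (hr : ∀ s a, r s a ∈ Set.Icc (0 : ℝ) 1) (hirr : Assump1 U) :
    ∃ (g : ℝ) (h : S → ℝ), ∀ s, g + h s = bellmanOp r U 1 h s := by
  obtain ⟨C, hC⟩ := exists_span_bound hU hr hirr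
  let γ : ℕ → ℝ := fun n => n / (n + 1)
  have hγ₀ : ∀ n, 0 ≤ γ n := fun n => by positivity
  have hγ₁ : ∀ n, γ n < 1 := fun n => (div_lt_one (by positivity)).2 (by linarith)
  choose V hV using fun n => exists_bellmanOp_eq_self (r := r) hU (hγ₀ n) (hγ₁ n)
  let s₀ : S := Classical.arbitrary S
  let w : ℕ → S → ℝ := fun n s => V n s - V n s₀
  have hw : ∀ n, w n ∈ Metric.closedBall 0 C := fun n => by
    rw [mem_closedBall_zero_iff, pi_norm_le_iff_of_nonempty]
    exact fun s => abs_le.2 ⟨by linarith [hC _ (hγ₀ n) (hγ₁ n) _ (hV n) s s₀],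
      hC _ (hγ₀ n) (hγ₁ n) _ (hV n) s₀ s⟩
  obtain ⟨h, -, φ, hφ, hlim⟩ := tendsto_subseq_of_bounded Metric.isBounded_closedBall hw
  have hγlim : Tendsto (γ ∘ φ) atTop (𝓝 1) :=
    (tendsto_natCast_div_add_atTop (1 : ℝ)).comp hφ.tendsto_atTop
  have hpair : Tendsto (fun n => ((γ ∘ φ) n, (w ∘ φ) n)) atTop (𝓝 ((1 : ℝ), h)) :=
    hγlim.prodMk_nhds hlim
  have hT : ∀ s, Tendsto ((fun x : ℝ × (S → ℝ) => bellmanOp r U x.1 x.2 s) ∘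
      fun n => ((γ ∘ φ) n, (w ∘ φ) n)) atTop (𝓝 (bellmanOp r U 1 h s)) := fun s =>
    ((continuous_bellmanOp_apply (r := r) hU s).tendsto ((1 : ℝ), h)).comp hpair
  refine ⟨bellmanOp r U 1 h s₀, h, fun s => tendsto_nhds_unique
    ((hT s₀).add ((continuous_apply s).continuousAt.tendsto.comp hlim)) ?_⟩
  convert hT s using 1
  funext n
  exact bellmanOp_relative_apply hU (hV (φ n)) s₀ s

end VanishingDiscount

section PolicyMatrix

variable {S A : Type*} [Fintype S] [Fintype A]

theorem polRew_add_polMat_mulVec (π : S → A → ℝ) (P : S → A → S → ℝ) (r : S → A → ℝ)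
    (h : S → ℝ) (s : S) :
    polRew π r s + (polMat π P *ᵥ h) s = ∑ a, π s a * (r s a + P s a ⬝ᵥ h) := by
  simp only [polRew, polMat, mulVec, dotProduct, of_apply, sum_mul, mul_add, sum_add_distrib,
    mul_sum, mul_assoc]
  rw [sum_comm]

end PolicyMatrix

section Policy

variable {S A : Type*} [Fintype S] [DecidableEq S] [Fintype A] {π : S → A → ℝ}
  {P : S → A → S → ℝ} {r : S → A → ℝ} {U : S → A → Set (S → ℝ)}

theorem polMat_mem_rowStochastic (hπ : ∀ s, π s ∈ stdSimplex ℝ A)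
    (hP : ∀ s a, P s a ∈ stdSimplex ℝ S) : polMat π P ∈ rowStochastic ℝ S := by
  refine mem_rowStochastic_iff_sum.2 ⟨fun s s' => sum_nonneg fun a _ =>
    mul_nonneg ((hπ s).1 a) ((hP s a).1 s'), fun s => ?_⟩
  simp only [polMat, of_apply]
  rw [sum_comm]
  simp [← mul_sum, (hP _ _).2, (hπ s).2]

theorem irredM_polMat (hirr : Assump1 U) (hπ : ∀ s, π s ∈ stdSimplex ℝ A)
    (hP : ∀ s a, P s a ∈ U s a) (hU : ∀ s a, U s a ⊆ stdSimplex ℝ S) : IrredM (polMat π P) := by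
  have hPS : ∀ s a, P s a ∈ stdSimplex ℝ S := fun s a => hU s a (hP s a)
  have : ∀ s, ∃ a, 0 < π s a := fun s => by
    obtain ⟨a, -, ha⟩ := exists_lt_of_sum_lt (s := univ) (f := fun _ => (0 : ℝ)) (g := π s)
      (by simp [(hπ s).2])
    exact ⟨a, ha⟩
  choose d hd using this
  refine IrredM.of_pos_imp_pos (polMat_mem_rowStochastic hπ hPS)
    (of_mem_rowStochastic fun s => hPS s (d s)) (fun i j hij => ?_) (hirr d P hP)
  exact (mul_pos (hd i) hij).trans_le <| single_le_sum (f := fun a => π i a * P i a j)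
    (fun a _ => mul_nonneg ((hπ i).1 a) ((hPS i a).1 j)) (mem_univ (d i))

theorem le_avgR_of_le (hπ : ∀ s, π s ∈ stdSimplex ℝ A) (hP : ∀ s a, P s a ∈ stdSimplex ℝ S)
    {h : S → ℝ} {g : ℝ} (hle : ∀ s, g + h s ≤ polRew π r s + (polMat π P *ᵥ h) s) (s : S) :
    g ≤ avgR π P r s :=
  le_liminf_cesaroMean (polMat_mem_rowStochastic hπ hP) hle s

theorem avgR_le_of_le (hπ : ∀ s, π s ∈ stdSimplex ℝ A) (hP : ∀ s a, P s a ∈ stdSimplex ℝ S)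
    {h : S → ℝ} {g : ℝ} (hle : ∀ s, polRew π r s + (polMat π P *ᵥ h) s ≤ g + h s) (s : S) :
    avgR π P r s ≤ g :=
  liminf_cesaroMean_le (polMat_mem_rowStochastic hπ hP) hle s

theorem robAvgR_le_avgR (hr : ∀ s a, 0 ≤ r s a) (hπ : ∀ s, π s ∈ stdSimplex ℝ A)
    (hU : ∀ s a, U s a ⊆ stdSimplex ℝ S) (hP : ∀ s a, P s a ∈ U s a) (s : S) :
    robAvgR U π r s ≤ avgR π P r s := by
  refine csInf_le ⟨0, ?_⟩ ⟨P, hP, rfl⟩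
  rintro _ ⟨P', hP', rfl⟩
  refine le_avgR_of_le hπ (fun s a => hU s a (hP' s a)) (h := 0) (fun s => ?_) s
  simpa [polRew] using sum_nonneg fun a _ => mul_nonneg ((hπ s).1 a) (hr s a)

theorem le_robAvgR_of_le_avgR (hU : ∀ s a, (U s a).Nonempty) {g : ℝ} {s : S}
    (h : ∀ P : S → A → S → ℝ, (∀ s a, P s a ∈ U s a) → g ≤ avgR π P r s) :
    g ≤ robAvgR U π r s := by
  choose P hP using hU
  refine le_csInf ⟨_, P, hP, rfl⟩ ?_
  rintro _ ⟨P', hP', rfl⟩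
  exact h P' hP'

end Policy

section Greedy

variable {S A : Type*} [Fintype S] [Fintype A] [Nonempty A] {r : S → A → ℝ}
  {U : S → A → Set (S → ℝ)} {h : S → ℝ}

def IsGreedy (r : S → A → ℝ) (U : S → A → Set (S → ℝ)) (h : S → ℝ) (π : S → A → ℝ) : Prop :=
  ∀ s, ∑ a, π s a * qValue r U 1 h s a = bellmanOp r U 1 h s

theorem exists_isGreedy : ∃ π : S → A → ℝ, (∀ s, π s ∈ stdSimplex ℝ A) ∧ IsGreedy r U h π := by
  classical
  choose a _ ha using fun s => exists_mem_eq_sup' univ_nonempty (qValue r U 1 h s)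
  refine ⟨fun s => Pi.single (a s) 1, fun s => single_mem_stdSimplex ℝ (a s), fun s => ?_⟩
  simp [bellmanOp, ha s, Pi.single_apply]

theorem IsGreedy.affineCombination {π₁ π₂ : S → A → ℝ} (h₁ : IsGreedy r U h π₁)
    (h₂ : IsGreedy r U h π₂) (α : ℝ) :
    IsGreedy r U h fun s a => α * π₁ s a + (1 - α) * π₂ s a := fun s => by
  simp only [add_mul, sum_add_distrib, mul_assoc, ← mul_sum, h₁ s, h₂ s]
  ring

end Greedy

section Optimality

variable {S A : Type*} [Fintype S] [DecidableEq S] [Fintype A] [Nonempty A] {π : S → A → ℝ}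
  {r : S → A → ℝ} {U : S → A → Set (S → ℝ)} {g : ℝ} {h : S → ℝ}
variable (hU : ∀ s a, IsUncertaintySet (U s a)) (hbell : ∀ s, g + h s = bellmanOp r U 1 h s)
include hU hbell

theorem robAvgR_le_of_bellman (hr : ∀ s a, 0 ≤ r s a) (hπ : ∀ s, π s ∈ stdSimplex ℝ A) (s : S) :
    robAvgR U π r s ≤ g := by
  obtain ⟨P, hP, hPh⟩ := exists_worstCase_kernel hU h
  refine (robAvgR_le_avgR hr hπ (fun s a => (hU s a).subset_stdSimplex) hP s).trans
    (avgR_le_of_le hπ (fun s a => (hU s a).subset_stdSimplex (hP s a)) (h := h) (fun s => ?_) s)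
  simpa only [polRew_add_polMat_mulVec, hPh, hbell, qValue, one_mul] using
    sum_mul_qValue_le_bellmanOp (r := r) (U := U) (γ := 1) (hπ s) h s

theorem IsGreedy.le_robAvgR (hπ : ∀ s, π s ∈ stdSimplex ℝ A) (hgr : IsGreedy r U h π) (s : S) :
    g ≤ robAvgR U π r s := by
  refine le_robAvgR_of_le_avgR (fun s a => (hU s a).nonempty) fun P hP => le_avgR_of_le hπ
    (fun s a => (hU s a).subset_stdSimplex (hP s a)) (h := h) (fun s => ?_) s
  rw [hbell, ← hgr s, polRew_add_polMat_mulVec]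
  exact sum_le_sum fun a _ => mul_le_mul_of_nonneg_left
    (by simpa [qValue] using suppF_le_dotProduct (hU s a).isCompact h (hP s a)) ((hπ s).1 a)

theorem sSup_robAvgR_eq (hr : ∀ s a, 0 ≤ r s a) (s : S) :
    sSup {x | ∃ μ : S → A → ℝ, (∀ s', μ s' ∈ stdSimplex ℝ A) ∧ x = robAvgR U μ r s} = g := by
  obtain ⟨π, hπ, hgr⟩ := exists_isGreedy (r := r) (U := U) (h := h)
  have hle : ∀ x ∈ {x | ∃ μ : S → A → ℝ, (∀ s', μ s' ∈ stdSimplex ℝ A) ∧ x = robAvgR U μ r s},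
      x ≤ g := by
    rintro _ ⟨μ, hμ, rfl⟩
    exact robAvgR_le_of_bellman hU hbell hr hμ s
  exact le_antisymm (csSup_le ⟨_, π, hπ, rfl⟩ hle)
    ((hgr.le_robAvgR hU hbell hπ s).trans (le_csSup ⟨g, hle⟩ ⟨π, hπ, rfl⟩))

theorem isGreedy_of_le_robAvgR (hr : ∀ s a, 0 ≤ r s a) (hirr : Assump1 U)
    (hπ : ∀ s, π s ∈ stdSimplex ℝ A) {s₁ : S} (hopt : g ≤ robAvgR U π r s₁) :
    IsGreedy r U h π := by
  by_contra hgr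
  set δ : S → ℝ := fun s => bellmanOp r U 1 h s - ∑ a, π s a * qValue r U 1 h s a
  have hδ : ∀ s, 0 ≤ δ s := fun s => sub_nonneg.2 (sum_mul_qValue_le_bellmanOp (hπ s) h s)
  obtain ⟨s₀, hs₀⟩ : ∃ s₀, 0 < δ s₀ := by
    obtain ⟨s₀, hs₀⟩ := not_forall.1 hgr
    exact ⟨s₀, (hδ s₀).lt_of_ne fun h0 => hs₀ (sub_eq_zero.1 h0.symm).symm⟩
  obtain ⟨P, hP, hPh⟩ := exists_worstCase_kernel hU h
  have hPS : ∀ s a, P s a ∈ stdSimplex ℝ S := fun s a => (hU s a).subset_stdSimplex (hP s a)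
  obtain ⟨c, hc, ψ, hψ⟩ := exists_potential (polMat_mem_rowStochastic hπ hPS)
    (irredM_polMat hirr hπ hP fun s a => (hU s a).subset_stdSimplex) hδ hs₀
  -- `h - ψ` witnesses that the gain of `π` under `P` is at most `g - c`.
  have hgain : avgR π P r s₁ ≤ g - c := by
    refine avgR_le_of_le hπ hPS (h := h - ψ) (fun s => ?_) s₁
    have hval : polRew π r s + (polMat π P *ᵥ h) s = g + h s - δ s := by
      simp only [polRew_add_polMat_mulVec, hPh, δ, ← hbell s, qValue, one_mul]
      ring
    rw [mulVec_sub, Pi.sub_apply, Pi.sub_apply]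
    linarith [hψ s]
  linarith [robAvgR_le_avgR hr hπ (fun s a => (hU s a).subset_stdSimplex) hP s₁]

end Optimality

end RobustMDP

open RobustMDP

/-- Under Assumption 1, the set of optimal robust policies is
convex: any convex combination of two optimal robust policies is optimal. -/
theorem stmt3 {S A : Type*} [Fintype S] [DecidableEq S] [Nonempty S]
    [Fintype A] [Nonempty A]
    (r : S → A → ℝ) (hr : ∀ s a, r s a ∈ Set.Icc (0 : ℝ) 1)
    (U : S → A → Set (S → ℝ))
    (hU : ∀ s a, (U s a).Nonempty ∧ IsCompact (U s a) ∧ Convex ℝ (U s a) ∧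
      U s a ⊆ stdSimplex ℝ S)
    (hirr : Assump1 U)
    (π₁ π₂ : S → A → ℝ)
    (hπ₁ : ∀ s, π₁ s ∈ stdSimplex ℝ A) (hπ₂ : ∀ s, π₂ s ∈ stdSimplex ℝ A)
    (hopt₁ : ∀ s, robAvgR U π₁ r s = sSup {x | ∃ μ : S → A → ℝ,
      (∀ s', μ s' ∈ stdSimplex ℝ A) ∧ x = robAvgR U μ r s})
    (hopt₂ : ∀ s, robAvgR U π₂ r s = sSup {x | ∃ μ : S → A → ℝ,
      (∀ s', μ s' ∈ stdSimplex ℝ A) ∧ x = robAvgR U μ r s})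
    (α : ℝ) (hα : α ∈ Set.Icc (0 : ℝ) 1) :
    (∀ s, (fun s' a => α * π₁ s' a + (1 - α) * π₂ s' a) s ∈ stdSimplex ℝ A) ∧
    (∀ s, robAvgR U (fun s' a => α * π₁ s' a + (1 - α) * π₂ s' a) r s
      = sSup {x | ∃ μ : S → A → ℝ,
        (∀ s', μ s' ∈ stdSimplex ℝ A) ∧ x = robAvgR U μ r s}) := by
  have hU' : ∀ s a, IsUncertaintySet (U s a) :=
    fun s a => ⟨(hU s a).1, (hU s a).2.1, (hU s a).2.2.2⟩
  have hr₀ : ∀ s a, 0 ≤ r s a := fun s a => (hr s a).1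
  obtain ⟨g, h, hbell⟩ := exists_bellman_solution hU' hr hirr
  have hsup := sSup_robAvgR_eq hU' hbell hr₀
  have hπ : ∀ s, (fun s' a => α * π₁ s' a + (1 - α) * π₂ s' a) s ∈ stdSimplex ℝ A :=
    fun s => convex_stdSimplex ℝ A (hπ₁ s) (hπ₂ s) hα.1 (sub_nonneg.2 hα.2) (by ring)
  let s₀ : S := Classical.arbitrary S
  have hgr₁ := isGreedy_of_le_robAvgR hU' hbell hr₀ hirr hπ₁ ((hopt₁ s₀).trans (hsup s₀)).ge
  have hgr₂ := isGreedy_of_le_robAvgR hU' hbell hr₀ hirr hπ₂ ((hopt₂ s₀).trans (hsup s₀)).ge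
  refine ⟨hπ, fun s => ?_⟩
  rw [hsup s]
  exact le_antisymm (robAvgR_le_of_bellman hU' hbell hr₀ hπ s)
    ((hgr₁.affineCombination hgr₂ α).le_robAvgR hU' hbell hπ s)
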